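/- Let 𝒜 be a positive definite self-adjoint operator on a Hilbert space H and suppose ê_U, ê_V : [0,T] → D(𝒜) are C¹ and satisfy ê_V' + 𝒜ê_U = ℛ₁ + ℛ_f, ê_U' - ê_V = ℛ₂ with ℛ₂ valued in D(𝒜). Then sup_{t∈[0,T]} |||(ê_U(t), ê_V(t))|||² ≤ 2|||(ê_U(0), ê_V(0))|||² + 4(∫₀^T |||(ℛ₂(t), ℛ₁(t)+ℛ_f(t))||| dt)², where |||(φ,ψ)|||² = ‖𝒜^{1/2}φ‖² + ‖ψ‖². -/

import Mathlib

/-!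
Since `S` may be unbounded and `eU` is differentiable only in `H`, the energy
`‖S eU‖² + ‖eV‖²` need not be differentiable. It is therefore approached from below by the
energies `‖approxS S μ eU‖² + ‖approxId S μ eV‖²` of bounded regularizations, built from
the orthogonal projection onto the closed graph of `μ⁻¹ S` in the completion of `H`. They satisfy
`⟪approxS u, approxS v⟫ = ⟪approxId v, approxId (A u)⟫`, so the coupling terms cancel in the
derivative of the regularized energy `E_μ` exactly as they do formally for the wave system, and
Cauchy–Schwarz leaves `E_μ' ≤ 2 √E_μ ρ`, with `ρ` the integrand on the right. Hence
`√E_μ(t) ≤ √E_μ(0) + ∫ ρ ≤ √E(0) + ∫ ρ`, and letting `μ → ∞` gives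
`E(t) ≤ (√E(0) + ∫ ρ)² ≤ 2 E(0) + 2 (∫ ρ)²`.
-/

open scoped RealInnerProductSpace
open UniformSpace MeasureTheory Set Filter Topology

theorem sqrt_le_sqrt_add_integral_of_hasDerivAt {E D ρ : ℝ → ℝ} {t : ℝ} (ht : 0 ≤ t)
    (hE : ∀ s ∈ Icc 0 t, HasDerivAt E (D s) s) (hE₀ : ∀ s ∈ Icc 0 t, 0 ≤ E s)
    (hD : ∀ s ∈ Icc 0 t, D s ≤ 2 * √(E s) * ρ s) (hρ₀ : ∀ s ∈ Icc 0 t, 0 ≤ ρ s)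
    (hρ : IntervalIntegrable ρ volume 0 t) :
    √(E t) ≤ √(E 0) + ∫ s in 0..t, ρ s := by
  -- `√(E + ε)` is differentiable even where `E` vanishes
  have hε : ∀ ε > 0, √(E t) ≤ √(E 0 + ε) + ∫ s in 0..t, ρ s := by
    intro ε hε
    have hpos : ∀ s ∈ Icc 0 t, 0 < √(E s + ε) := fun s hs =>
      Real.sqrt_pos.2 (by linarith [hE₀ s hs])
    have hderiv : ∀ s ∈ Icc 0 t,
        HasDerivAt (fun s => √(E s + ε)) (D s / (2 * √(E s + ε))) s := fun s hs =>
      ((hE s hs).add_const ε).sqrt (Real.sqrt_pos.1 (hpos s hs)).ne'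
    have hbound : ∀ s ∈ Icc 0 t, D s / (2 * √(E s + ε)) ≤ ρ s := by
      intro s hs
      rw [div_le_iff₀ (by linarith [hpos s hs])]
      calc D s ≤ 2 * √(E s) * ρ s := hD s hs
        _ ≤ 2 * √(E s + ε) * ρ s := by
          gcongr
          · exact hρ₀ s hs
          · linarith
        _ = ρ s * (2 * √(E s + ε)) := by ring
    have hint := intervalIntegral.sub_le_integral_of_hasDeriv_right_of_le ht
      (fun s hs => (hderiv s hs).continuousAt.continuousWithinAt)
      (fun s hs => (hderiv s (Ioo_subset_Icc_self hs)).hasDerivWithinAt)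
      ((intervalIntegrable_iff_integrableOn_Icc_of_le ht).1 hρ)
      (fun s hs => hbound s (Ioo_subset_Icc_self hs))
    have : √(E t) ≤ √(E t + ε) := Real.sqrt_le_sqrt (by linarith)
    linarith
  have hlim : Tendsto (fun ε => √(E 0 + ε) + ∫ s in 0..t, ρ s) (𝓝[>] 0)
      (𝓝 (√(E 0) + ∫ s in 0..t, ρ s)) := by
    refine tendsto_nhdsWithin_of_tendsto_nhds ?_
    simpa using
      ((continuous_const.add continuous_id).sqrt.add continuous_const).tendsto (0 : ℝ)
        (f := fun ε => √(E 0 + ε) + ∫ s in 0..t, ρ s)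
  exact ge_of_tendsto hlim (eventually_nhdsWithin_of_forall hε)

theorem sqrt_energy_le_add_integral {H E₁ E₂ : Type*} [NormedAddCommGroup H]
    [InnerProductSpace ℝ H] [NormedAddCommGroup E₁] [InnerProductSpace ℝ E₁]
    [NormedAddCommGroup E₂] [InnerProductSpace ℝ E₂] {A S : H →ₗ[ℝ] H}
    {F : H →L[ℝ] E₁} {G : H →L[ℝ] E₂} (hFG : ∀ u v, ⟪F u, F v⟫ = ⟪G v, G (A u)⟫)
    (hF : ∀ w, ‖F w‖ ≤ ‖S w‖) (hG : ∀ w, ‖G w‖ ≤ ‖w‖) {t : ℝ} (ht : 0 ≤ t)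
    {u v u' v' f r : ℝ → H} (hu : ∀ s ∈ Icc 0 t, HasDerivAt u (u' s) s)
    (hv : ∀ s ∈ Icc 0 t, HasDerivAt v (v' s) s) (hv' : ∀ s ∈ Icc 0 t, v' s + A (u s) = f s)
    (hu' : ∀ s ∈ Icc 0 t, u' s - v s = r s)
    (hint : IntervalIntegrable (fun s => √(‖S (r s)‖ ^ 2 + ‖f s‖ ^ 2)) volume 0 t) :
    √(‖F (u t)‖ ^ 2 + ‖G (v t)‖ ^ 2) ≤
      √(‖F (u 0)‖ ^ 2 + ‖G (v 0)‖ ^ 2) + ∫ s in 0..t, √(‖S (r s)‖ ^ 2 + ‖f s‖ ^ 2) := by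
  refine sqrt_le_sqrt_add_integral_of_hasDerivAt
    (E := fun s => ‖F (u s)‖ ^ 2 + ‖G (v s)‖ ^ 2)
    (D := fun s => 2 * ⟪F (u s), F (u' s)⟫ + 2 * ⟪G (v s), G (v' s)⟫) ht (fun s hs => ?_)
    (fun s _ => by positivity) (fun s hs => ?_) (fun s _ => Real.sqrt_nonneg _) hint
  · exact ((F.hasFDerivAt.comp_hasDerivAt s (hu s hs)).norm_sq).add
      (G.hasFDerivAt.comp_hasDerivAt s (hv s hs)).norm_sq
  · have hD : ⟪F (u s), F (u' s)⟫ + ⟪G (v s), G (v' s)⟫ =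
        ⟪F (u s), F (r s)⟫ + ⟪G (v s), G (f s)⟫ := by
      rw [← hu' s hs, ← hv' s hs, map_sub, map_add, inner_sub_right, inner_add_right,
        hFG (u s) (v s)]
      ring
    calc 2 * ⟪F (u s), F (u' s)⟫ + 2 * ⟪G (v s), G (v' s)⟫
        = 2 * (⟪F (u s), F (r s)⟫ + ⟪G (v s), G (f s)⟫) := by rw [← hD]; ring
      _ ≤ 2 * (‖F (u s)‖ * ‖S (r s)‖ + ‖G (v s)‖ * ‖f s‖) := by
        gcongr
        · exact (real_inner_le_norm _ _).trans (by gcongr; exact hF _)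
        · exact (real_inner_le_norm _ _).trans (by gcongr; exact hG _)
      _ ≤ 2 * (√(‖F (u s)‖ ^ 2 + ‖G (v s)‖ ^ 2) * √(‖S (r s)‖ ^ 2 + ‖f s‖ ^ 2)) := by
        gcongr
        simpa using Real.sum_mul_le_sqrt_mul_sqrt Finset.univ ![‖F (u s)‖, ‖G (v s)‖]
          ![‖S (r s)‖, ‖f s‖]
      _ = _ := by ring

noncomputable section

namespace GraphRegularization

variable {H : Type*} [NormedAddCommGroup H] [InnerProductSpace ℝ H]

abbrev GraphSpace (H : Type*) [NormedAddCommGroup H] [InnerProductSpace ℝ H] :=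
  WithLp 2 (Completion H × Completion H)

def graphMap (S : H →ₗ[ℝ] H) : H →ₗ[ℝ] GraphSpace H where
  toFun x := WithLp.toLp 2 ((x : Completion H), (S x : Completion H))
  map_add' x y := by simp [← WithLp.toLp_add, Completion.coe_add]
  map_smul' c x := by simp [← WithLp.toLp_smul, Completion.coe_smul]

def graph (S : H →ₗ[ℝ] H) : Submodule ℝ (GraphSpace H) :=
  (LinearMap.range (graphMap S)).topologicalClosure

instance (S : H →ₗ[ℝ] H) : (graph S).HasOrthogonalProjection := by
  unfold graph
  infer_instance

def inlGraph : H →L[ℝ] GraphSpace H :=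
  (WithLp.prodContinuousLinearEquiv 2 ℝ _ _).symm.toContinuousLinearMap ∘L
    ContinuousLinearMap.inl ℝ _ _ ∘L Completion.toComplL

@[simp] lemma inlGraph_apply (x : H) : inlGraph x = WithLp.toLp 2 ((x : Completion H), 0) := rfl

lemma inner_inlGraph (p : GraphSpace H) (w : H) :
    ⟪p, inlGraph w⟫ = ⟪p.fst, (w : Completion H)⟫ := by
  simp [WithLp.prod_inner_apply]

variable (S : H →ₗ[ℝ] H)

@[simp] lemma graphMap_apply (x : H) :
    graphMap S x = WithLp.toLp 2 ((x : Completion H), (S x : Completion H)) := rfl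

lemma graphMap_mem_graph (x : H) : graphMap S x ∈ graph S :=
  Submodule.le_topologicalClosure _ (LinearMap.mem_range_self _ x)

lemma inner_snd_eq_inner_fst_of_mem_graph (hS : S.IsSymmetric) {p : GraphSpace H}
    (hp : p ∈ graph S) (w : H) :
    ⟪p.snd, (w : Completion H)⟫ = ⟪p.fst, (S w : Completion H)⟫ := by
  have hclosed : IsClosed
      {p : GraphSpace H | ⟪p.snd, (w : Completion H)⟫ = ⟪p.fst, (S w : Completion H)⟫} :=
    isClosed_eq ((WithLp.sndL 2 ℝ _ _).continuous.inner continuous_const)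
      ((WithLp.fstL 2 ℝ _ _).continuous.inner continuous_const)
  rw [graph, ← SetLike.mem_coe, Submodule.topologicalClosure_coe] at hp
  refine closure_minimal ?_ hclosed hp
  rintro _ ⟨x, rfl⟩
  simp [Completion.inner_coe, hS x w]

lemma inner_fst_add_inner_snd_of_mem_orthogonal {q : GraphSpace H} (hq : q ∈ (graph S)ᗮ)
    (w : H) : ⟪q.fst, (w : Completion H)⟫ + ⟪q.snd, (S w : Completion H)⟫ = 0 := by
  simpa [WithLp.prod_inner_apply] using
    Submodule.inner_left_of_mem_orthogonal (graphMap_mem_graph S w) hq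

/-- For `R = (1 + S̄* S̄)⁻¹`, `regId S w` and `regS S w` have the Gram matrices of `R^{1/2} w`
and `S̄ R^{1/2} w`: they are bounded surrogates for `w` and `S w`. -/
def regId : H →L[ℝ] GraphSpace H := (graph S).starProjection ∘L inlGraph

def regS : H →L[ℝ] GraphSpace H := (graph S)ᗮ.starProjection ∘L inlGraph

lemma regId_mem_graph (w : H) : regId S w ∈ graph S :=
  Submodule.starProjection_apply_mem _ _

lemma regS_mem_orthogonal (w : H) : regS S w ∈ (graph S)ᗮ :=
  Submodule.starProjection_apply_mem _ _

lemma regId_add_regS (w : H) : regId S w + regS S w = inlGraph w :=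
  Submodule.starProjection_add_starProjection_orthogonal _

lemma fst_regId_add_fst_regS (w : H) : (regId S w).fst + (regS S w).fst = w := by
  simpa using congrArg WithLp.fst (regId_add_regS S w)

lemma snd_regId (w : H) : (regId S w).snd = -(regS S w).snd := by
  simpa [eq_neg_iff_add_eq_zero] using congrArg WithLp.snd (regId_add_regS S w)

lemma norm_regId_sq_add_norm_regS_sq (w : H) :
    ‖regId S w‖ ^ 2 + ‖regS S w‖ ^ 2 = ‖w‖ ^ 2 := by
  simpa [regId, regS] using
    ((graph S).norm_sq_eq_add_norm_sq_starProjection (inlGraph w)).symm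

lemma norm_regId_le (w : H) : ‖regId S w‖ ≤ ‖w‖ := by
  have := norm_regId_sq_add_norm_regS_sq S w
  exact (pow_le_pow_iff_left₀ (norm_nonneg _) (norm_nonneg _) two_ne_zero).mp (by nlinarith)

lemma norm_regS_le (w : H) : ‖regS S w‖ ≤ ‖S w‖ := calc
  ‖regS S w‖ = ⨅ g : graph S, ‖inlGraph w - (g : GraphSpace H)‖ := by
    rw [← Submodule.starProjection_minimal, ← Submodule.starProjection_orthogonal_val]
    rfl
  _ ≤ ‖inlGraph w - graphMap S w‖ :=
    ciInf_le ⟨0, by rintro _ ⟨g, rfl⟩; exact norm_nonneg _⟩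
      (⟨_, graphMap_mem_graph S w⟩ : graph S)
  _ = ‖S w‖ := by
    rw [inlGraph_apply, graphMap_apply, ← WithLp.toLp_sub, Prod.mk_sub_mk, sub_self, zero_sub,
      WithLp.norm_toLp_snd, norm_neg, Completion.norm_coe]

theorem inner_regS_regS (hS : S.IsSymmetric) (u v : H) :
    ⟪regS S u, regS S v⟫ = ⟪regId S v, regId S (S (S u))⟫ := calc
  ⟪regS S u, regS S v⟫ = ⟪regS S v, inlGraph u⟫ := by
    rw [real_inner_comm, ← regId_add_regS S u, inner_add_right,
      Submodule.inner_left_of_mem_orthogonal (regId_mem_graph S u) (regS_mem_orthogonal S v),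
      zero_add]
  _ = -⟪(regS S v).snd, (S u : Completion H)⟫ := by
    rw [inner_inlGraph, eq_neg_iff_add_eq_zero]
    exact inner_fst_add_inner_snd_of_mem_orthogonal S (regS_mem_orthogonal S v) u
  _ = ⟪regId S v, inlGraph (S (S u))⟫ := by
    rw [inner_inlGraph, ← inner_snd_eq_inner_fst_of_mem_graph S hS (regId_mem_graph S v),
      snd_regId, inner_neg_left]
  _ = ⟪regId S v, regId S (S (S u))⟫ := by
    rw [← regId_add_regS S (S (S u)), inner_add_right,
      Submodule.inner_right_of_mem_orthogonal (regId_mem_graph S v) (regS_mem_orthogonal S _),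
      add_zero]

lemma sq_norm_sub_sq_norm_regId_le (w : H) : ‖w‖ ^ 2 - ‖regId S w‖ ^ 2 ≤ ‖S w‖ ^ 2 := by
  have := norm_regS_le S w
  have := norm_regId_sq_add_norm_regS_sq S w
  nlinarith [norm_nonneg (regS S w)]

theorem sq_norm_sub_sq_norm_regS_le (hS : S.IsSymmetric) (w : H) :
    ‖S w‖ ^ 2 - ‖regS S w‖ ^ 2 ≤ 2 * ‖S w‖ * ‖S (S w)‖ := by
  set q := regS S w
  have hq : ‖S w‖ ^ 2 ≤ ‖q‖ * ‖S w‖ + ‖q‖ * ‖S (S w)‖ := calc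
    ‖S w‖ ^ 2 = ⟪(w : Completion H), (S (S w) : Completion H)⟫ := by
      rw [Completion.inner_coe, ← hS, real_inner_self_eq_norm_sq]
    _ = -⟪q.snd, (S w : Completion H)⟫ + ⟪q.fst, (S (S w) : Completion H)⟫ := by
      rw [← fst_regId_add_fst_regS S w, inner_add_left,
        ← inner_snd_eq_inner_fst_of_mem_graph S hS (regId_mem_graph S w), snd_regId,
        inner_neg_left]
    _ ≤ ‖q‖ * ‖S w‖ + ‖q‖ * ‖S (S w)‖ := by
      gcongr
      · refine (neg_le_abs _).trans ((abs_real_inner_le_norm _ _).trans ?_)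
        rw [Completion.norm_coe]
        gcongr
        exact WithLp.norm_snd_le _ q
      · refine (real_inner_le_norm _ _).trans ?_
        rw [Completion.norm_coe]
        gcongr
        exact WithLp.norm_fst_le _ q
  have hqS := norm_regS_le S w
  nlinarith [norm_nonneg q, norm_nonneg (S (S w)),
    mul_nonneg (sub_nonneg.2 hqS) (norm_nonneg q)]

/-- Regularizing `μ⁻¹ S` instead of `S` replaces `R` by `μ² (μ² + S̄* S̄)⁻¹`, which tends to the
identity as `μ → ∞`. -/
def approxS (μ : ℝ) : H →L[ℝ] GraphSpace H := μ • regS (μ⁻¹ • S)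

def approxId (μ : ℝ) : H →L[ℝ] GraphSpace H := regId (μ⁻¹ • S)

variable {S} {μ : ℝ}

lemma norm_approxS_le (hμ : 0 < μ) (w : H) : ‖approxS S μ w‖ ≤ ‖S w‖ := by
  have h := norm_regS_le (μ⁻¹ • S) w
  rw [LinearMap.smul_apply, norm_smul, Real.norm_of_nonneg (inv_pos.2 hμ).le] at h
  rw [approxS, smul_apply, norm_smul, Real.norm_of_nonneg hμ.le]
  calc μ * ‖regS (μ⁻¹ • S) w‖ ≤ μ * (μ⁻¹ * ‖S w‖) := by gcongr
    _ = ‖S w‖ := by field_simp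

lemma norm_approxId_le (w : H) : ‖approxId S μ w‖ ≤ ‖w‖ := norm_regId_le _ w

theorem inner_approxS_approxS (hS : S.IsSymmetric) (hμ : μ ≠ 0) (u v : H) :
    ⟪approxS S μ u, approxS S μ v⟫ = ⟪approxId S μ v, approxId S μ (S (S u))⟫ := by
  simp only [approxS, approxId, smul_apply, real_inner_smul_left, real_inner_smul_right,
    inner_regS_regS _ (hS.smul (by simp)), LinearMap.smul_apply, map_smul]
  field_simp

theorem sq_norm_sub_sq_norm_approxS_le (hS : S.IsSymmetric) (hμ : 0 < μ) (w : H) :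
    ‖S w‖ ^ 2 - ‖approxS S μ w‖ ^ 2 ≤ 2 * ‖S w‖ * ‖S (S w)‖ / μ := by
  have h := sq_norm_sub_sq_norm_regS_le (μ⁻¹ • S) (hS.smul (by simp)) w
  simp only [LinearMap.smul_apply, map_smul, smul_smul, norm_smul, norm_mul, norm_inv,
    Real.norm_of_nonneg hμ.le] at h
  rw [approxS, smul_apply, norm_smul, Real.norm_of_nonneg hμ.le]
  calc ‖S w‖ ^ 2 - (μ * ‖regS (μ⁻¹ • S) w‖) ^ 2
      = μ ^ 2 * ((μ⁻¹ * ‖S w‖) ^ 2 - ‖regS (μ⁻¹ • S) w‖ ^ 2) := by field_simp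
    _ ≤ μ ^ 2 * (2 * (μ⁻¹ * ‖S w‖) * (μ⁻¹ * μ⁻¹ * ‖S (S w)‖)) := by gcongr
    _ = 2 * ‖S w‖ * ‖S (S w)‖ / μ := by field_simp

theorem sq_norm_sub_sq_norm_approxId_le (w : H) :
    ‖w‖ ^ 2 - ‖approxId S μ w‖ ^ 2 ≤ ‖S w‖ ^ 2 / μ ^ 2 := by
  have h := sq_norm_sub_sq_norm_regId_le (μ⁻¹ • S) w
  rwa [LinearMap.smul_apply, norm_smul, norm_inv, Real.norm_eq_abs, mul_pow, inv_pow, sq_abs,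
    inv_mul_eq_div] at h

variable (S)

theorem tendsto_sq_norm_approxS (hS : S.IsSymmetric) (w : H) :
    Tendsto (fun μ => ‖approxS S μ w‖ ^ 2) atTop (𝓝 (‖S w‖ ^ 2)) := by
  have hlower : Tendsto (fun μ : ℝ => ‖S w‖ ^ 2 - 2 * ‖S w‖ * ‖S (S w)‖ / μ) atTop
      (𝓝 (‖S w‖ ^ 2)) := by
    simpa using
      tendsto_const_nhds.sub (tendsto_const_nhds.div_atTop (tendsto_id (α := ℝ)))
  refine tendsto_of_tendsto_of_tendsto_of_le_of_le' hlower tendsto_const_nhds ?_ ?_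
  · filter_upwards [eventually_gt_atTop 0] with μ hμ
    exact sub_le_comm.1 (sq_norm_sub_sq_norm_approxS_le hS hμ w)
  · filter_upwards [eventually_gt_atTop 0] with μ hμ
    gcongr
    exact norm_approxS_le hμ w

theorem tendsto_sq_norm_approxId (w : H) :
    Tendsto (fun μ => ‖approxId S μ w‖ ^ 2) atTop (𝓝 (‖w‖ ^ 2)) := by
  have hlower : Tendsto (fun μ : ℝ => ‖w‖ ^ 2 - ‖S w‖ ^ 2 / μ ^ 2) atTop (𝓝 (‖w‖ ^ 2)) := by
    simpa using tendsto_const_nhds.sub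
      (tendsto_const_nhds.div_atTop (tendsto_pow_atTop (α := ℝ) two_ne_zero))
  refine tendsto_of_tendsto_of_tendsto_of_le_of_le hlower tendsto_const_nhds
    (fun μ => sub_le_comm.1 (sq_norm_sub_sq_norm_approxId_le w)) (fun μ => ?_)
  gcongr
  exact norm_approxId_le w

end GraphRegularization

end

open GraphRegularization in
theorem a_posteriori_estimate_general {H : Type*} [NormedAddCommGroup H] [InnerProductSpace ℝ H]
    (T : ℝ) (A S : H →ₗ[ℝ] H)
    (hSsym : ∀ x y : H, ⟪S x, y⟫ = ⟪x, S y⟫)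
    (hSS : ∀ x : H, S (S x) = A x)
    (eU eV eU' eV' R1 R2 Rf : ℝ → H)
    (hU : ∀ t ∈ Set.Icc (0 : ℝ) T, HasDerivAt eU (eU' t) t)
    (hV : ∀ t ∈ Set.Icc (0 : ℝ) T, HasDerivAt eV (eV' t) t)
    (heq1 : ∀ t ∈ Set.Icc (0 : ℝ) T, eV' t + A (eU t) = R1 t + Rf t)
    (heq2 : ∀ t ∈ Set.Icc (0 : ℝ) T, eU' t - eV t = R2 t)
    (hRint : IntervalIntegrable
      (fun t => Real.sqrt (‖S (R2 t)‖ ^ 2 + ‖R1 t + Rf t‖ ^ 2))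
      MeasureTheory.volume 0 T) :
    ∀ t ∈ Set.Icc (0 : ℝ) T,
      ‖S (eU t)‖ ^ 2 + ‖eV t‖ ^ 2 ≤
        2 * (‖S (eU 0)‖ ^ 2 + ‖eV 0‖ ^ 2) +
          4 * (∫ t in (0 : ℝ)..T,
            Real.sqrt (‖S (R2 t)‖ ^ 2 + ‖R1 t + Rf t‖ ^ 2)) ^ 2 := by
  intro t ht
  set ρ := fun s => √(‖S (R2 s)‖ ^ 2 + ‖R1 s + Rf s‖ ^ 2)
  set E₀ := ‖S (eU 0)‖ ^ 2 + ‖eV 0‖ ^ 2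
  have hsub : Icc 0 t ⊆ Icc 0 T := Icc_subset_Icc_right ht.2
  have hρt : ∫ s in 0..t, ρ s ≤ ∫ s in 0..T, ρ s :=
    intervalIntegral.integral_mono_interval le_rfl ht.1 ht.2
      (Eventually.of_forall fun _ => Real.sqrt_nonneg _) hRint
  have happrox (μ : ℝ) (hμ : 0 < μ) :
      ‖approxS S μ (eU t)‖ ^ 2 + ‖approxId S μ (eV t)‖ ^ 2 ≤
        (√E₀ + ∫ s in 0..T, ρ s) ^ 2 := by
    have h := sqrt_energy_le_add_integral
      (fun u v => by rw [inner_approxS_approxS hSsym hμ.ne', hSS]) (norm_approxS_le hμ)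
      norm_approxId_le ht.1 (fun s hs => hU s (hsub hs)) (fun s hs => hV s (hsub hs))
      (fun s hs => heq1 s (hsub hs)) (fun s hs => heq2 s (hsub hs))
      (hRint.mono_set (uIcc_subset_uIcc left_mem_uIcc (mem_uIcc_of_le ht.1 ht.2)))
    have h₀ : √(‖approxS S μ (eU 0)‖ ^ 2 + ‖approxId S μ (eV 0)‖ ^ 2) ≤ √E₀ :=
      Real.sqrt_le_sqrt (add_le_add
        (pow_le_pow_left₀ (norm_nonneg _) (norm_approxS_le hμ _) 2)
        (pow_le_pow_left₀ (norm_nonneg _) (norm_approxId_le _) 2))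
    exact (Real.sqrt_le_iff.1 (h.trans (by linarith))).2
  have hE : ‖S (eU t)‖ ^ 2 + ‖eV t‖ ^ 2 ≤ (√E₀ + ∫ s in 0..T, ρ s) ^ 2 :=
    le_of_tendsto ((tendsto_sq_norm_approxS S hSsym _).add (tendsto_sq_norm_approxId S _))
      ((eventually_gt_atTop 0).mono happrox)
  nlinarith [Real.sq_sqrt (show 0 ≤ E₀ by positivity),
    sq_nonneg (√E₀ - ∫ s in 0..T, ρ s)]

/-- Main a posteriori error estimate (Theorem 3.1): the energy norm of the reconstruction
error is controlled by its initial value and the time integral of the energy norm of the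
residuals. `S` plays the role of the positive square root `𝒜^{1/2}` of `A`. -/
theorem a_posteriori_estimate {H : Type*} [NormedAddCommGroup H] [InnerProductSpace ℝ H]
    (T : ℝ) (hT : 0 ≤ T) (A S : H →ₗ[ℝ] H)
    (hAsym : ∀ x y : H, ⟪A x, y⟫ = ⟪x, A y⟫)
    (hSsym : ∀ x y : H, ⟪S x, y⟫ = ⟪x, S y⟫)
    (hSS : ∀ x : H, S (S x) = A x)
    (c : ℝ) (hc : 0 < c) (hpos : ∀ x : H, c * ‖x‖ ^ 2 ≤ ⟪A x, x⟫)
    (eU eV eU' eV' R1 R2 Rf : ℝ → H)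
    (hU : ∀ t ∈ Set.Icc (0 : ℝ) T, HasDerivAt eU (eU' t) t)
    (hV : ∀ t ∈ Set.Icc (0 : ℝ) T, HasDerivAt eV (eV' t) t)
    (heq1 : ∀ t ∈ Set.Icc (0 : ℝ) T, eV' t + A (eU t) = R1 t + Rf t)
    (heq2 : ∀ t ∈ Set.Icc (0 : ℝ) T, eU' t - eV t = R2 t)
    (hRint : IntervalIntegrable
      (fun t => Real.sqrt (‖S (R2 t)‖ ^ 2 + ‖R1 t + Rf t‖ ^ 2))
      MeasureTheory.volume 0 T) :
    ∀ t ∈ Set.Icc (0 : ℝ) T,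
      ‖S (eU t)‖ ^ 2 + ‖eV t‖ ^ 2 ≤
        2 * (‖S (eU 0)‖ ^ 2 + ‖eV 0‖ ^ 2) +
          4 * (∫ t in (0 : ℝ)..T,
            Real.sqrt (‖S (R2 t)‖ ^ 2 + ‖R1 t + Rf t‖ ^ 2)) ^ 2 :=
  a_posteriori_estimate_general T A S hSsym hSS eU eV eU' eV' R1 R2 Rf hU hV heq1 heq2 hRint
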